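/- (TM-EOS formula for E.) Let (ρ_L, p_L), (ρ_R, p_R) be pairs of positive reals with ρ_L/p_L ≠ ρ_R/p_R. For K ∈ {L,R} set θ_K = p_K/ρ_K, z₂,K = ρ_K/p_K, h_K = (5/2)θ_K + √(1+(9/4)θ_K²), S_K = −ln ρ_K + (3/2)ln θ_K + (3/2)ln((3/2)θ_K + √(1+(9/4)θ_K²)), and W₁,K = z₂,K h_K − S_K. Write {{a}} = (a_L+a_R)/2 for arithmetic means of quantities derived from z₂, and {{a}}_ln for logarithmic means. Then E := (W₁,R − W₁,L − (ln ρ_R − ln ρ_L))/(z₂,R − z₂,L) = (3/2)/{{z₂}}_ln + {{√(1+9/(4z₂²))}} − ({{3/(2z₂)}}/{{z₂}})·( {{z₂}}·{{3/(2z₂)}}/{{√(1+9/(4z₂²))}} − (3/2)(1 + {{3/(2z₂)}}/{{√(1+9/(4z₂²))}})/{{3/(2z₂)+√(1+9/(4z₂²))}}_ln ), where the last logarithmic mean is taken of the two values 3/(2z₂,K) + √(1+9/(4z₂,K²)). -/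

import Mathlib

/-!
Write `z = ρ/p = 1/θ`, `a = (3/2)θ = 3/(2z)`, `q = √(1 + a²)` and `u = a + q`. Then
`W₁ − ln ρ = 5/2 + z q + (3/2) ln z − (3/2) ln u`, so `E` is a sum of three difference quotients
over `[z]`. The logarithmic ones give logarithmic means, and the algebraic jumps are expressed
through arithmetic means: `[a] = −[z] {{a}}/{{z}}` because `a ∝ 1/z`, and
`[q] = {{a}} [a] / {{q}}` because `q² − a² = 1`.
-/

open Real

def arithMean {K : Type*} [Field K] (x y : K) : K := (x + y) / 2

noncomputable def logMean (x y : ℝ) : ℝ := (y - x) / (log y - log x)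

section Jumps

variable {K : Type*} [Field K] [CharZero K]

theorem mul_sub_mul_eq_arithMean (xL xR yL yR : K) :
    xR * yR - xL * yL = arithMean xL xR * (yR - yL) + arithMean yL yR * (xR - xL) := by
  unfold arithMean; ring

theorem sub_eq_arithMean_of_sq_sub_sq {qL qR aL aR : K} (hq : qL + qR ≠ 0)
    (h : qR ^ 2 - qL ^ 2 = aR ^ 2 - aL ^ 2) :
    qR - qL = arithMean aL aR / arithMean qL qR * (aR - aL) := by
  unfold arithMean; field_simp; linear_combination h

end Jumps

theorem div_logMean (c x y : ℝ) : c / logMean x y = c * (log y - log x) / (y - x) :=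
  div_div_eq_mul_div _ _ _

namespace TMEOS

noncomputable def a (z : ℝ) : ℝ := 3 / (2 * z)

noncomputable def q (z : ℝ) : ℝ := √(1 + 9 / (4 * z ^ 2))

noncomputable def u (z : ℝ) : ℝ := a z + q z

theorem q_pos (z : ℝ) : 0 < q z := by unfold q; positivity

theorem a_pos {z : ℝ} (hz : 0 < z) : 0 < a z := by unfold a; positivity

theorem q_sq (z : ℝ) : q z ^ 2 = 1 + a z ^ 2 := by
  unfold q a; rw [sq_sqrt (by positivity)]; ring

theorem a_sub_a {zL zR : ℝ} (hzL : 0 < zL) (hzR : 0 < zR) :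
    a zR - a zL = -(zR - zL) * (arithMean (a zL) (a zR) / arithMean zL zR) := by
  unfold a arithMean; field_simp; ring

theorem q_sub_q (zL zR : ℝ) :
    q zR - q zL = arithMean (a zL) (a zR) / arithMean (q zL) (q zR) * (a zR - a zL) :=
  sub_eq_arithMean_of_sq_sub_sq (by linarith [q_pos zL, q_pos zR]) (by rw [q_sq, q_sq]; ring)

theorem mul_q_sub_mul_q {zL zR : ℝ} (hzL : 0 < zL) (hzR : 0 < zR) :
    zR * q zR - zL * q zL = (zR - zL) * (arithMean (q zL) (q zR)
      - arithMean (a zL) (a zR) ^ 2 / arithMean (q zL) (q zR)) := by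
  rw [mul_sub_mul_eq_arithMean, q_sub_q, a_sub_a hzL hzR]
  have hZ : arithMean zL zR ≠ 0 := by unfold arithMean; positivity
  field_simp
  ring

theorem u_sub_u {zL zR : ℝ} (hzL : 0 < zL) (hzR : 0 < zR) :
    u zR - u zL = -(zR - zL) * (arithMean (a zL) (a zR) / arithMean zL zR
      * (1 + arithMean (a zL) (a zR) / arithMean (q zL) (q zR))) := by
  have hq := q_sub_q zL zR
  rw [a_sub_a hzL hzR] at hq
  unfold u
  linear_combination hq + a_sub_a hzL hzR

theorem entropyVariable_sub_log {ρ p : ℝ} (hρ : 0 < ρ) (hp : 0 < p) :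
    ρ / p * (5 / 2 * (p / ρ) + √(1 + 9 / 4 * (p / ρ) ^ 2))
        - (-log ρ + 3 / 2 * log (p / ρ)
          + 3 / 2 * log (3 / 2 * (p / ρ) + √(1 + 9 / 4 * (p / ρ) ^ 2)))
        - log ρ
      = 5 / 2 + ρ / p * q (ρ / p) + 3 / 2 * log (ρ / p) - 3 / 2 * log (u (ρ / p)) := by
  have hq : √(1 + 9 / 4 * (p / ρ) ^ 2) = q (ρ / p) := by unfold q; congr 1; field_simp
  have ha : 3 / 2 * (p / ρ) = a (ρ / p) := by unfold a; field_simp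
  have hlog : log (p / ρ) = -log (ρ / p) := by rw [← log_inv, inv_div]
  rw [hq, ha, hlog, ← u]
  field_simp
  ring

theorem E_eq_means {zL zR : ℝ} (hzL : 0 < zL) (hzR : 0 < zR) (hne : zL ≠ zR) :
    ((5 / 2 + zR * q zR + 3 / 2 * log zR - 3 / 2 * log (u zR))
        - (5 / 2 + zL * q zL + 3 / 2 * log zL - 3 / 2 * log (u zL))) / (zR - zL)
      = 3 / 2 / logMean zL zR + arithMean (q zL) (q zR)
        - arithMean (a zL) (a zR) / arithMean zL zR
          * (arithMean zL zR * arithMean (a zL) (a zR) / arithMean (q zL) (q zR)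
            - 3 / 2 * (1 + arithMean (a zL) (a zR) / arithMean (q zL) (q zR))
              / logMean (u zL) (u zR)) := by
  have hZ : 0 < arithMean zL zR := by unfold arithMean; linarith
  have hA : 0 < arithMean (a zL) (a zR) := by unfold arithMean; linarith [a_pos hzL, a_pos hzR]
  have hQ : 0 < arithMean (q zL) (q zR) := by unfold arithMean; linarith [q_pos zL, q_pos zR]
  have hzq := mul_q_sub_mul_q hzL hzR
  rw [div_logMean, div_logMean, u_sub_u hzL hzR]
  field_simp at hzq ⊢
  linear_combination 2 * hzq

end TMEOS

theorem stmt11 (ρL pL ρR pR : ℝ)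
    (hρL : 0 < ρL) (hpL : 0 < pL) (hρR : 0 < ρR) (hpR : 0 < pR)
    (hne : ρL / pL ≠ ρR / pR) :
    let z2L : ℝ := ρL / pL
    let z2R : ℝ := ρR / pR
    let θL : ℝ := pL / ρL
    let θR : ℝ := pR / ρR
    let hL : ℝ := (5 / 2) * θL + Real.sqrt (1 + (9 / 4) * θL ^ 2)
    let hR : ℝ := (5 / 2) * θR + Real.sqrt (1 + (9 / 4) * θR ^ 2)
    let SL : ℝ := -Real.log ρL + (3 / 2) * Real.log θL
      + (3 / 2) * Real.log ((3 / 2) * θL + Real.sqrt (1 + (9 / 4) * θL ^ 2))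
    let SR : ℝ := -Real.log ρR + (3 / 2) * Real.log θR
      + (3 / 2) * Real.log ((3 / 2) * θR + Real.sqrt (1 + (9 / 4) * θR ^ 2))
    let W1L : ℝ := z2L * hL - SL
    let W1R : ℝ := z2R * hR - SR
    let lz2 : ℝ := (z2R - z2L) / (Real.log z2R - Real.log z2L)
    let aSq : ℝ := (Real.sqrt (1 + 9 / (4 * z2L ^ 2)) + Real.sqrt (1 + 9 / (4 * z2R ^ 2))) / 2
    let aInv : ℝ := (3 / (2 * z2L) + 3 / (2 * z2R)) / 2
    let az2 : ℝ := (z2L + z2R) / 2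
    let lu : ℝ := ((3 / (2 * z2R) + Real.sqrt (1 + 9 / (4 * z2R ^ 2)))
        - (3 / (2 * z2L) + Real.sqrt (1 + 9 / (4 * z2L ^ 2))))
      / (Real.log (3 / (2 * z2R) + Real.sqrt (1 + 9 / (4 * z2R ^ 2)))
        - Real.log (3 / (2 * z2L) + Real.sqrt (1 + 9 / (4 * z2L ^ 2))))
    (W1R - W1L - (Real.log ρR - Real.log ρL)) / (z2R - z2L)
      = (3 / 2) / lz2 + aSq
        - (aInv / az2) * (az2 * aInv / aSq - (3 / 2) * (1 + aInv / aSq) / lu) := by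
  intro z2L z2R θL θR hL hR SL SR W1L W1R lz2 aSq aInv az2 lu
  have hWL : W1L - log ρL
      = 5 / 2 + z2L * TMEOS.q z2L + 3 / 2 * log z2L - 3 / 2 * log (TMEOS.u z2L) :=
    TMEOS.entropyVariable_sub_log hρL hpL
  have hWR : W1R - log ρR
      = 5 / 2 + z2R * TMEOS.q z2R + 3 / 2 * log z2R - 3 / 2 * log (TMEOS.u z2R) :=
    TMEOS.entropyVariable_sub_log hρR hpR
  rw [show W1R - W1L - (log ρR - log ρL) = (W1R - log ρR) - (W1L - log ρL) by ring, hWL, hWR]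
  exact TMEOS.E_eq_means (div_pos hρL hpL) (div_pos hρR hpR) hne
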